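/- Let I = [0,1] ⊆ ℝ with the BCK operation x·y = 0 if x ≤ y, else x·y = x. Then [x,y] = 0 if x ≤ y and [x,y] = y otherwise; consequently every term of the lower central series of I contains [0,1), so I is not nilpotent. -/

import Mathlib

/-- x ∧ y := y·(y·x) for a binary operation. -/
def pmeet {A : Type*} (op : A → A → A) (x y : A) : A := op y (op y x)

/-- pseudo-commutator [x,y] := (x∧y)·(y∧x). -/
def pcom {A : Type*} (op : A → A → A) (x y : A) : A :=
  op (pmeet op x y) (pmeet op y x)

/-- Membership in the subalgebra generated by a subset. -/
inductive clos {A : Type*} (op : A → A → A) (S : Set A) : A → Prop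
  | base {x : A} : x ∈ S → clos op S x
  | mul {x y : A} : clos op S x → clos op S y → clos op S (op x y)

/-- Lower central series: A₀ = A, A_{k+1} = subalgebra generated by all [x,y]
with x ∈ A_k, y ∈ A; in particular A₁ is generated by all pseudo-commutators. -/
def lcs {A : Type*} (op : A → A → A) : ℕ → Set A
  | 0 => Set.univ
  | n + 1 => {a | clos op {z | ∃ x ∈ lcs op n, ∃ y : A, z = pcom op x y} a}

/-- The unit interval [0,1] ⊆ ℝ. -/
abbrev UnitInt : Type := {x : ℝ // 0 ≤ x ∧ x ≤ 1}

/-- The least element 0 of the unit interval. -/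
def uiZero : UnitInt := ⟨0, by norm_num⟩

/-- The BCK operation on [0,1]: x·y = 0 if x ≤ y, else x. -/
noncomputable def uiOp (x y : UnitInt) : UnitInt := if (x : ℝ) ≤ (y : ℝ) then uiZero else x

lemma ui_pcom (x y : UnitInt) :
    pcom uiOp x y = if (x : ℝ) ≤ (y : ℝ) then uiZero else y := by
  have hx0 := x.2.1
  have hy0 := y.2.1
  unfold pcom pmeet uiOp
  rcases le_or_gt (x : ℝ) (y : ℝ) with h | h
  · simp only [if_pos h]
    rcases le_or_gt (y : ℝ) (x : ℝ) with h2 | h2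
    · have hxy : x = y := Subtype.ext (le_antisymm h h2)
      subst hxy
      simp [uiZero]
      intro h3 _; exact absurd h3 (lt_irrefl _)
    · simp only [if_neg (not_le.mpr h2)]
      split_ifs with h3 h4 h5 <;> simp_all [uiZero] <;>
        first | rfl | (exfalso; simp_all) | linarith
  · simp only [if_neg (not_le.mpr h), if_pos h.le]
    have hz : (uiZero : UnitInt).1 = 0 := rfl
    split_ifs with h3 h4 h5 <;> simp_all [uiZero, Subtype.ext_iff] <;> linarith

/-- In ([0,1], ·): [x,y] = 0 if x ≤ y and [x,y] = y otherwise; consequently every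
term of the lower central series contains [0,1), so [0,1] is not nilpotent. -/
theorem unitInterval_not_nilpotent :
    (∀ x y : UnitInt,
      pcom uiOp x y = if (x : ℝ) ≤ (y : ℝ) then uiZero else y) ∧
    (∀ n : ℕ, {x : UnitInt | (x : ℝ) < 1} ⊆ lcs uiOp n) ∧
    ¬ ∃ n : ℕ, lcs uiOp n = ({uiZero} : Set UnitInt) := by
  have hlcs : ∀ n : ℕ, {x : UnitInt | (x : ℝ) < 1} ⊆ lcs uiOp n := by
    intro n
    induction n with
    | zero => intro x _; trivial
    | succ n ih =>
      intro x hx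
      have hx' : (x:ℝ) < 1 := hx
      set m : UnitInt := ⟨((x:ℝ)+1)/2, by constructor <;> [linarith [x.2.1]; linarith]⟩
      have hm1 : (m : ℝ) < 1 := by simp only [m]; linarith
      have hxm : (x : ℝ) < (m : ℝ) := by simp only [m]; linarith
      have hmem : m ∈ lcs uiOp n := ih hm1
      have : x = pcom uiOp m x := by
        rw [ui_pcom]; rw [if_neg (not_le.mpr hxm)]
      exact clos.base ⟨m, hmem, x, this⟩
  refine ⟨ui_pcom, hlcs, ?_⟩
  rintro ⟨n, hn⟩
  have h : (⟨1/2, by norm_num⟩ : UnitInt) ∈ lcs uiOp n := hlcs n (show ((1:ℝ)/2) < 1 by norm_num)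
  rw [hn] at h
  simp [uiZero, Subtype.ext_iff] at h
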